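/- For every μ ∈ (0,1) and σ² > 0, the mean of the Simplex distribution equals its location parameter: ∫₀¹ y · f(y; μ, σ²) dy = μ. -/

import Mathlib

open MeasureTheory Real

/-- Unit deviance of the Simplex distribution. -/
noncomputable def simplexDev (y μ : ℝ) : ℝ :=
  (y - μ) ^ 2 / (y * (1 - y) * μ ^ 2 * (1 - μ) ^ 2)

/-- Density of the Simplex distribution. -/
noncomputable def simplexPdf (μ σ2 y : ℝ) : ℝ :=
  (2 * π * σ2 * (y * (1 - y)) ^ 3) ^ (-(1/2 : ℝ)) * Real.exp (-simplexDev y μ / (2 * σ2))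

/-!
Substituting `y = s ^ 2 / (1 + s ^ 2)` turns `y f(y; μ, σ²) dy` on `(0, 1)` into
`2 (2πσ²)^(-1/2) exp(-(s - m / s) ^ 2 / (2σ²μ²)) ds` on `(0, ∞)`, where `m = μ / (1 - μ)`.
By the Cauchy–Schlömilch transformation, `∫₀^∞ F (s - m / s) ds = ½ ∫_ℝ F` for even integrable `F`:
the inversion `s ↦ m / s` flips the sign of `s - m / s` and turns `ds` into `m / s ^ 2 ds`, so twice
the integral carries the Jacobian `1 + m / s ^ 2` of `s ↦ s - m / s`. What remains is a Gaussian
integral, equal to `μ`.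
-/

open Set

section ChangeOfVariables

variable {E : Type*} [NormedAddCommGroup E] [NormedSpace ℝ E] {c : ℝ}

lemma hasDerivAt_sub_const_div (c : ℝ) {t : ℝ} (ht : t ≠ 0) :
    HasDerivAt (fun t ↦ t - c / t) (1 + c / t ^ 2) t :=
  ((hasDerivAt_id' t).sub ((hasDerivAt_const t c).div (hasDerivAt_id' t) ht)).congr_deriv
    (by ring)

lemma hasDerivAt_const_div (c : ℝ) {t : ℝ} (ht : t ≠ 0) :
    HasDerivAt (fun t ↦ c / t) (-(c / t ^ 2)) t :=
  ((hasDerivAt_const t c).div (hasDerivAt_id' t) ht).congr_deriv (by ring)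

lemma strictMonoOn_sub_const_div (hc : 0 < c) : StrictMonoOn (fun t ↦ t - c / t) (Ioi 0) :=
  fun _ hx _ _ hxy ↦ sub_lt_sub hxy (div_lt_div_of_pos_left hc hx hxy)

lemma strictAntiOn_const_div (hc : 0 < c) : StrictAntiOn (fun t ↦ c / t) (Ioi 0) :=
  fun _ hx _ _ hxy ↦ div_lt_div_of_pos_left hc hx hxy

lemma image_sub_const_div_Ioi (hc : 0 < c) : (fun t ↦ t - c / t) '' Ioi 0 = univ := by
  refine eq_univ_of_forall fun u ↦ ?_
  have hsq := Real.sq_sqrt (by positivity : 0 ≤ u ^ 2 + 4 * c)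
  have hlt : |u| < √(u ^ 2 + 4 * c) := by
    rw [← Real.sqrt_sq_eq_abs]; exact Real.sqrt_lt_sqrt (sq_nonneg u) (by linarith)
  -- the positive root of `t ^ 2 - u * t - c`
  set t := (u + √(u ^ 2 + 4 * c)) / 2 with ht_def
  have ht : 0 < t := by linarith [neg_abs_le u]
  have hroot : t * t = u * t + c := by rw [ht_def]; linear_combination (1 / 4) * hsq
  refine ⟨t, ht, ?_⟩
  field_simp
  linarith

lemma image_const_div_Ioi (hc : 0 < c) : (fun t ↦ c / t) '' Ioi 0 = Ioi 0 := by
  ext x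
  refine ⟨fun ⟨t, ht, hx⟩ ↦ hx ▸ div_pos hc ht, fun hx ↦ ⟨c / x, div_pos hc hx, ?_⟩⟩
  field_simp [(mem_Ioi.1 hx).ne']

lemma integral_Ioi_comp_const_div (hc : 0 < c) (g : ℝ → E) :
    ∫ t in Ioi 0, g t = ∫ t in Ioi 0, (c / t ^ 2) • g (c / t) := by
  rw [← image_const_div_Ioi hc, integral_image_eq_integral_abs_deriv_smul measurableSet_Ioi
    (fun t ht ↦ (hasDerivAt_const_div c (mem_Ioi.1 ht).ne').hasDerivWithinAt)
    (strictAntiOn_const_div hc).injOn, image_const_div_Ioi hc]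
  refine setIntegral_congr_fun measurableSet_Ioi fun t ht ↦ ?_
  have : 0 < c / t ^ 2 := div_pos hc (pow_pos ht 2)
  simp only [abs_neg, abs_of_pos this]

lemma abs_smul_comp_sub_const_div_eqOn (hc : 0 ≤ c) (F : ℝ → E) :
    EqOn (fun t ↦ |1 + c / t ^ 2| • F (t - c / t)) (fun t ↦ (1 + c / t ^ 2) • F (t - c / t))
      (Ioi 0) :=
  fun t _ ↦ by simp only [abs_of_pos (by positivity : 0 < 1 + c / t ^ 2)]

lemma hasDerivWithinAt_sub_const_div_Ioi {t : ℝ} (ht : t ∈ Ioi 0) :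
    HasDerivWithinAt (fun t ↦ t - c / t) (1 + c / t ^ 2) (Ioi 0) t :=
  (hasDerivAt_sub_const_div c (mem_Ioi.1 ht).ne').hasDerivWithinAt

lemma integral_Ioi_smul_comp_sub_const_div (hc : 0 < c) (F : ℝ → E) :
    ∫ t in Ioi 0, (1 + c / t ^ 2) • F (t - c / t) = ∫ u, F u := by
  rw [← setIntegral_congr_fun measurableSet_Ioi (abs_smul_comp_sub_const_div_eqOn hc.le F),
    ← integral_image_eq_integral_abs_deriv_smul measurableSet_Ioi
      (fun _ ↦ hasDerivWithinAt_sub_const_div_Ioi) (strictMonoOn_sub_const_div hc).injOn,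
    image_sub_const_div_Ioi hc, Measure.restrict_univ]

lemma integrableOn_Ioi_smul_comp_sub_const_div (hc : 0 < c) {F : ℝ → E} (hF : Integrable F) :
    IntegrableOn (fun t ↦ (1 + c / t ^ 2) • F (t - c / t)) (Ioi 0) := by
  refine IntegrableOn.congr_fun ?_ (abs_smul_comp_sub_const_div_eqOn hc.le F) measurableSet_Ioi
  rw [← integrableOn_image_iff_integrableOn_abs_deriv_smul measurableSet_Ioi
    (fun _ ↦ hasDerivWithinAt_sub_const_div_Ioi) (strictMonoOn_sub_const_div hc).injOn,
    image_sub_const_div_Ioi hc]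
  exact hF.integrableOn

lemma integrableOn_Ioi_comp_sub_const_div (hc : 0 < c) {F : ℝ → E} (hF : Integrable F) :
    IntegrableOn (fun t ↦ F (t - c / t)) (Ioi 0) := by
  have hw : ∀ t : ℝ, 1 ≤ 1 + c / t ^ 2 := fun t ↦ le_add_of_nonneg_right (by positivity)
  have hmeas : AEStronglyMeasurable (fun t : ℝ ↦ (1 + c / t ^ 2)⁻¹) (volume.restrict (Ioi 0)) :=
    (by fun_prop : Measurable fun t : ℝ ↦ (1 + c / t ^ 2)⁻¹).aestronglyMeasurable
  refine ((integrableOn_Ioi_smul_comp_sub_const_div hc hF).bdd_smul 1 hmeas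
    (ae_of_all _ fun t ↦ ?_)).congr (ae_of_all _ fun t ↦ ?_)
  · rw [norm_inv, Real.norm_of_nonneg (zero_le_one.trans (hw t))]
    exact inv_le_one_of_one_le₀ (hw t)
  · exact inv_smul_smul₀ (zero_lt_one.trans_le (hw t)).ne' _

theorem integral_Ioi_comp_sub_const_div (hc : 0 < c) {F : ℝ → E} (hF : Integrable F)
    (heven : ∀ u, F (-u) = F u) :
    ∫ t in Ioi 0, F (t - c / t) = (2 : ℝ)⁻¹ • ∫ u, F u := by
  have hF' := integrableOn_Ioi_comp_sub_const_div hc hF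
  have hcF : IntegrableOn (fun t ↦ (c / t ^ 2) • F (t - c / t)) (Ioi 0) :=
    ((integrableOn_Ioi_smul_comp_sub_const_div hc hF).sub hF').congr_fun
      (fun t _ ↦ by simp [add_smul]) measurableSet_Ioi
  have hrefl : ∫ t in Ioi 0, F (t - c / t) = ∫ t in Ioi 0, (c / t ^ 2) • F (t - c / t) := by
    conv_lhs => rw [integral_Ioi_comp_const_div hc]
    refine setIntegral_congr_fun measurableSet_Ioi fun t _ ↦ ?_
    simp only [div_div_cancel₀ hc.ne', ← heven (t - c / t), neg_sub]
  calc ∫ t in Ioi 0, F (t - c / t)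
      = (2 : ℝ)⁻¹ • ((∫ t in Ioi 0, F (t - c / t)) +
          ∫ t in Ioi 0, (c / t ^ 2) • F (t - c / t)) := by
        rw [← hrefl, ← two_smul ℝ, smul_smul, inv_mul_cancel₀ two_ne_zero, one_smul]
    _ = (2 : ℝ)⁻¹ • ∫ t in Ioi 0, (1 + c / t ^ 2) • F (t - c / t) := by
        simp only [← integral_add hF' hcF, add_smul, one_smul]
    _ = (2 : ℝ)⁻¹ • ∫ u, F u := by rw [integral_Ioi_smul_comp_sub_const_div hc]

lemma hasDerivAt_sq_div_one_add_sq (s : ℝ) :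
    HasDerivAt (fun s ↦ s ^ 2 / (1 + s ^ 2)) (2 * s / (1 + s ^ 2) ^ 2) s := by
  have hsq : HasDerivAt (fun s : ℝ ↦ s ^ 2) (2 * s) s := by simpa using hasDerivAt_pow 2 s
  exact (hsq.div (hsq.const_add 1) (by positivity)).congr_deriv (by field_simp; ring)

lemma strictMonoOn_sq_div_one_add_sq : StrictMonoOn (fun s : ℝ ↦ s ^ 2 / (1 + s ^ 2)) (Ioi 0) := by
  intro x hx y _ hxy
  have hsq : x ^ 2 < y ^ 2 := pow_lt_pow_left₀ hxy (le_of_lt hx) two_ne_zero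
  rw [div_lt_div_iff₀ (by positivity) (by positivity)]
  linarith

lemma image_sq_div_one_add_sq_Ioi : (fun s : ℝ ↦ s ^ 2 / (1 + s ^ 2)) '' Ioi 0 = Ioo 0 1 := by
  ext y
  constructor
  · rintro ⟨s, hs, rfl⟩
    have : 0 < s ^ 2 := pow_pos hs 2
    exact ⟨by positivity, (div_lt_one (by positivity)).2 (by linarith)⟩
  · rintro ⟨hy0, hy1⟩
    have hx : 0 < y / (1 - y) := div_pos hy0 (sub_pos.2 hy1)
    refine ⟨√(y / (1 - y)), Real.sqrt_pos.2 hx, ?_⟩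
    have : 1 - y ≠ 0 := (sub_pos.2 hy1).ne'
    simp only [Real.sq_sqrt hx.le]
    field_simp
    ring

lemma integral_Ioo_zero_one_eq_integral_Ioi_sq_div_one_add_sq (g : ℝ → E) :
    ∫ y in Ioo 0 1, g y = ∫ s in Ioi 0, (2 * s / (1 + s ^ 2) ^ 2) • g (s ^ 2 / (1 + s ^ 2)) := by
  rw [← image_sq_div_one_add_sq_Ioi, integral_image_eq_integral_abs_deriv_smul measurableSet_Ioi
    (fun s _ ↦ (hasDerivAt_sq_div_one_add_sq s).hasDerivWithinAt)
    strictMonoOn_sq_div_one_add_sq.injOn]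
  refine setIntegral_congr_fun measurableSet_Ioi fun s hs ↦ ?_
  have : 0 < s := hs
  simp only [abs_of_pos (by positivity : 0 < 2 * s / (1 + s ^ 2) ^ 2)]

end ChangeOfVariables

lemma simplexDev_sq_div_one_add_sq {μ s : ℝ} (hμ0 : μ ≠ 0) (hμ1 : μ ≠ 1) (hs : s ≠ 0) :
    simplexDev (s ^ 2 / (1 + s ^ 2)) μ = ((s - μ / (1 - μ) / s) / μ) ^ 2 := by
  have : 1 - μ ≠ 0 := sub_ne_zero.2 hμ1.symm
  have : 1 + s ^ 2 ≠ 0 := by positivity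
  unfold simplexDev
  field_simp
  ring

-- `y dy / (y (1 - y)) ^ (3 / 2) = 2 ds` for `y = s ^ 2 / (1 + s ^ 2)`
lemma mul_simplexPdf_sq_div_one_add_sq {μ σ2 s : ℝ} (hμ0 : μ ≠ 0) (hμ1 : μ ≠ 1) (hσ : 0 ≤ σ2)
    (hs : 0 < s) :
    2 * s / (1 + s ^ 2) ^ 2 * (s ^ 2 / (1 + s ^ 2) * simplexPdf μ σ2 (s ^ 2 / (1 + s ^ 2))) =
      2 * (2 * π * σ2) ^ (-(1 / 2 : ℝ)) *
        exp (-(1 / (2 * σ2 * μ ^ 2)) * (s - μ / (1 - μ) / s) ^ 2) := by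
  set q := s / (1 + s ^ 2) with hq
  have hcube : (s ^ 2 / (1 + s ^ 2) * (1 - s ^ 2 / (1 + s ^ 2))) ^ 3 = (q ^ 3) ^ 2 := by
    rw [hq]; field_simp; ring
  have hrpow : ((q ^ 3) ^ 2) ^ (-(1 / 2 : ℝ)) = (q ^ 3)⁻¹ := by
    rw [Real.rpow_neg (sq_nonneg _), ← Real.sqrt_eq_rpow, Real.sqrt_sq (by positivity)]
  rw [simplexPdf, simplexDev_sq_div_one_add_sq hμ0 hμ1 hs.ne', hcube,
    Real.mul_rpow (x := 2 * π * σ2) (by positivity) (by positivity), hrpow]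
  have : 1 + s ^ 2 ≠ 0 := by positivity
  rw [hq]
  field_simp

theorem simplex_mean (μ σ2 : ℝ) (hμ : μ ∈ Set.Ioo (0:ℝ) 1) (hσ : 0 < σ2) :
    ∫ y in Set.Ioo (0:ℝ) 1, y * simplexPdf μ σ2 y = μ := by
  obtain ⟨hμ0, hμ1⟩ := hμ
  set b := 1 / (2 * σ2 * μ ^ 2)
  have hb : 0 < b := by positivity
  have hgauss : ∫ s in Ioi 0, exp (-b * (s - μ / (1 - μ) / s) ^ 2) = 2⁻¹ * √(π / b) := by
    rw [← integral_gaussian]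
    exact integral_Ioi_comp_sub_const_div (div_pos hμ0 (sub_pos.2 hμ1))
      (integrable_exp_neg_mul_sq hb) fun u ↦ by simp only [neg_sq]
  have hsqrt : √(π / b) = √(2 * π * σ2) * μ := by
    rw [← Real.sqrt_sq hμ0.le, ← Real.sqrt_mul (by positivity)]
    congr 1
    simp only [b]
    field_simp
  rw [integral_Ioo_zero_one_eq_integral_Ioi_sq_div_one_add_sq,
    setIntegral_congr_fun measurableSet_Ioi fun s hs ↦ (smul_eq_mul _ _).trans
      (mul_simplexPdf_sq_div_one_add_sq hμ0.ne' hμ1.ne hσ.le hs),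
    integral_const_mul, hgauss, hsqrt, Real.rpow_neg (by positivity), ← Real.sqrt_eq_rpow]
  field_simp
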